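/- Let S : [0,2) → [0,2) be defined by S(0) = 0 and S(y) = 2 − y for y ∈ (0,2). For every y ∈ [0,2) ∩ ℤ[φ] there exists N₀ such that for every N ≥ N₀ and every choice of maps R_1, …, R_N with each R_k equal to R or to R∘S, the point R_N(⋯(R_1(y))⋯) belongs to the set {0, 1, 2−φ, φ, φ−1, 3φ−3, 3−φ, 5−3φ}. -/

import Mathlib

/-!
Write `y = m + nφ` and let `z = m + nψ`, `ψ = 1 - φ`, be its Galois conjugate. Every branch of
`R` acts on `z` too: the three expanding branches multiply it by `ψ³ = 3 - 2φ`, of modulus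
below `1/4`, and add at most `4φ - 4`; the two translation branches shift it by `±2φ`; and `S`
sends it to `2 - z`. A translation branch lands in `[0, 2 - φ) ∪ [φ, 2)`, which `S` preserves
apart from the point `φ` of the target set, so the next step is expanding. Hence any two steps
lower `|z|` by at least `1` as long as `|z| ≥ 13`. The points of `[0, 2) ∩ ℤ[φ]` with
`|z| ≤ 13` are finitely many, and a computation on coordinates checks that from each of them
every composition of three maps `R`, `R ∘ S` passes through the target set, which both maps
preserve.
-/

open Set

noncomputable section

/-- The golden ratio `(1+√5)/2`. -/
def gold : ℝ := (1 + Real.sqrt 5) / 2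

/-- The ring `ℤ[φ]`. -/
def Zgold : Set ℝ := {x | ∃ m n : ℤ, x = m + n * gold}

/-- The renormalization map `R` on `[0,2)`. -/
def Rmap (y : ℝ) : ℝ :=
  if y < 2 - gold then gold ^ 3 * y
  else if y < 4 - 2 * gold then y + 2 * gold - 2
  else if y < 2 * gold - 2 then gold ^ 3 * y - 2 * gold
  else if y < gold then y - 2 * gold + 2
  else gold ^ 3 * y - 4 * gold

/-- The involution `S(y) = 2 - y` on `[0,2)`, with `S 0 = 0`. -/
def Smap (y : ℝ) : ℝ := if y = 0 then 0 else 2 - y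

/-- Iterated composition: `chain g y n = g (n-1) ( ⋯ (g 0 y) ⋯ )`. -/
def chain (g : ℕ → ℝ → ℝ) (y : ℝ) : ℕ → ℝ
  | 0 => y
  | n + 1 => g n (chain g y n)


section EventuallyIn

variable {f₁ f₂ : ℝ → ℝ} {A : Set ℝ}

def EventuallyIn (f₁ f₂ : ℝ → ℝ) (A : Set ℝ) (x : ℝ) : Prop :=
  ∃ N₀ : ℕ, ∀ N ≥ N₀, ∀ g : ℕ → ℝ → ℝ, (∀ k < N, g k = f₁ ∨ g k = f₂) → chain g x N ∈ A

theorem chain_succ' (g : ℕ → ℝ → ℝ) (x : ℝ) (N : ℕ) :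
    chain g x (N + 1) = chain (fun k => g (k + 1)) (g 0 x) N := by
  induction N with
  | zero => rfl
  | succ N ih => exact congrArg (g (N + 1)) ih

theorem chain_mem_of_mapsTo (h₁ : MapsTo f₁ A A) (h₂ : MapsTo f₂ A A) {x : ℝ} (hx : x ∈ A)
    {g : ℕ → ℝ → ℝ} {N : ℕ} (hg : ∀ k < N, g k = f₁ ∨ g k = f₂) : chain g x N ∈ A := by
  induction N with
  | zero => exact hx
  | succ N ih =>
    have hN := ih fun k hk => hg k (by omega)
    show g N (chain g x N) ∈ A
    rcases hg N N.lt_succ_self with h | h <;> rw [h]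
    exacts [h₁ hN, h₂ hN]

theorem EventuallyIn.of_mem (h₁ : MapsTo f₁ A A) (h₂ : MapsTo f₂ A A) {x : ℝ} (hx : x ∈ A) :
    EventuallyIn f₁ f₂ A x :=
  ⟨0, fun _ _ _ hg => chain_mem_of_mapsTo h₁ h₂ hx hg⟩

theorem EventuallyIn.of_apply {x : ℝ} (h₁ : EventuallyIn f₁ f₂ A (f₁ x))
    (h₂ : EventuallyIn f₁ f₂ A (f₂ x)) : EventuallyIn f₁ f₂ A x := by
  obtain ⟨N₁, hN₁⟩ := h₁
  obtain ⟨N₂, hN₂⟩ := h₂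
  refine ⟨N₁ + N₂ + 1, fun N hN g hg => ?_⟩
  obtain ⟨N, rfl⟩ : ∃ M, N = M + 1 := ⟨N - 1, by omega⟩
  have hg' : ∀ k < N, g (k + 1) = f₁ ∨ g (k + 1) = f₂ := fun k hk => hg (k + 1) (by omega)
  rw [chain_succ']
  rcases hg 0 (by omega) with h | h <;> rw [h]
  · exact hN₁ N (by omega) _ hg'
  · exact hN₂ N (by omega) _ hg'

end EventuallyIn

theorem gold_sq : gold ^ 2 = gold + 1 := Real.goldenRatio_sq

theorem gold_bounds : 8 / 5 < gold ∧ gold < 13 / 8 := by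
  have := gold_sq
  have : 0 < gold := Real.goldenRatio_pos
  constructor <;> nlinarith

def translationSet : Set ℝ := Ico (2 - gold) (4 - 2 * gold) ∪ Ico (2 * gold - 2) gold

def outerSet : Set ℝ := Ico 0 (2 - gold) ∪ Ico gold 2

theorem Rmap_mem_Ico {y : ℝ} (hy : y ∈ Ico 0 2) : Rmap y ∈ Ico 0 2 := by
  obtain ⟨hg₁, hg₂⟩ := gold_bounds
  have h3 : gold ^ 3 = 2 * gold + 1 := by linear_combination (gold + 1) * gold_sq
  have hsq := gold_sq
  obtain ⟨h₀, h₂⟩ := hy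
  unfold Rmap
  split_ifs <;> rw [h3] at * <;> constructor <;> nlinarith

theorem Smap_mem_Ico {y : ℝ} (hy : y ∈ Ico 0 2) : Smap y ∈ Ico 0 2 := by
  obtain ⟨h₀, h₂⟩ := hy
  unfold Smap
  split_ifs with h
  · simp
  · constructor <;> [linarith; exact sub_lt_self 2 (lt_of_le_of_ne h₀ (Ne.symm h))]

theorem Rmap_mapsTo_translationSet : MapsTo Rmap translationSet outerSet := by
  obtain ⟨hg₁, hg₂⟩ := gold_bounds
  rintro y (⟨h₁, h₂⟩ | ⟨h₁, h₂⟩) <;> unfold Rmap outerSet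
  · rw [if_neg (by linarith), if_pos h₂]
    right; constructor <;> linarith
  · rw [if_neg (by linarith), if_neg (by linarith), if_neg (by linarith), if_pos h₂]
    left; constructor <;> linarith

theorem Smap_mem_outerSet {y : ℝ} (hy : y ∈ outerSet) (hyg : y ≠ gold) : Smap y ∈ outerSet := by
  obtain ⟨hg₁, hg₂⟩ := gold_bounds
  unfold Smap
  split_ifs with h
  · left; constructor <;> linarith
  rcases hy with ⟨h₁, h₂⟩ | ⟨h₁, h₂⟩
  · right; constructor <;> linarith [lt_of_le_of_ne h₁ (Ne.symm h)]
  · left; constructor <;> linarith [lt_of_le_of_ne h₁ (Ne.symm hyg)]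

theorem not_mem_translationSet_of_mem_outerSet {y : ℝ} (hy : y ∈ outerSet) :
    y ∉ translationSet := by
  obtain ⟨hg₁, hg₂⟩ := gold_bounds
  rintro (⟨h₁, h₂⟩ | ⟨h₁, h₂⟩) <;> rcases hy with ⟨h₃, h₄⟩ | ⟨h₃, h₄⟩ <;> linarith

def terminalSet : Set ℝ := {0, 1, 2 - gold, gold, gold - 1, 3 * gold - 3, 3 - gold, 5 - 3 * gold}

abbrev Settles (x : ℝ) : Prop := EventuallyIn Rmap (Rmap ∘ Smap) terminalSet x

/-- `a + b φ < 0`, decided in integer arithmetic: `2 (a + b φ) = (2a + b) + b √5`. -/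
def NegGold (a b : ℤ) : Prop :=
  (2 * a + b < 0 ∧ 5 * b ^ 2 < (2 * a + b) ^ 2) ∨
    (b < 0 ∧ (2 * a + b < 0 ∨ (2 * a + b) ^ 2 < 5 * b ^ 2))

instance (a b : ℤ) : Decidable (NegGold a b) := by unfold NegGold; infer_instance

theorem negGold_iff (a b : ℤ) : NegGold a b ↔ (a : ℝ) + b * gold < 0 := by
  have hs : Real.sqrt 5 ^ 2 = 5 := Real.sq_sqrt (by norm_num)
  have hs0 : 0 < Real.sqrt 5 := by positivity
  have key : (a : ℝ) + b * gold < 0 ↔ (2 * a + b : ℝ) + b * Real.sqrt 5 < 0 := by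
    unfold gold; constructor <;> intro h <;> linarith
  have hcast : ∀ x y : ℤ, x < y ↔ (x : ℝ) < y := fun x y => Int.cast_lt.symm
  rw [key, NegGold]
  simp only [hcast]
  push_cast
  generalize (2 * a + b : ℝ) = c
  have hsq : ((b : ℝ) * Real.sqrt 5) ^ 2 = 5 * b ^ 2 := by rw [mul_pow, hs]; ring
  have hsign : (b : ℝ) < 0 ↔ b * Real.sqrt 5 < 0 :=
    ⟨fun h => mul_neg_of_neg_of_pos h hs0, fun h => neg_of_mul_neg_left h hs0.le⟩
  rw [← hsq, hsign]
  generalize (b : ℝ) * Real.sqrt 5 = e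
  constructor
  · rintro (⟨hc, h⟩ | ⟨he, hc | h⟩)
    · linarith [sq_lt_sq.mp h, le_abs_self e, abs_of_neg hc]
    · linarith
    · linarith [sq_lt_sq.mp h, le_abs_self c, abs_of_neg he]
  · intro h
    rcases lt_or_ge e 0 with he | he
    · right; refine ⟨he, ?_⟩
      rcases lt_or_ge c 0 with hc | hc
      · exact Or.inl hc
      · right; nlinarith
    · left; constructor <;> nlinarith

namespace GoldPair

def val (p : ℤ × ℤ) : ℝ := p.1 + p.2 * gold

def conj (p : ℤ × ℤ) : ℝ := p.1 + p.2 * (1 - gold)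

def Lt (p q : ℤ × ℤ) : Prop := NegGold (p.1 - q.1) (p.2 - q.2)

instance (p q : ℤ × ℤ) : Decidable (Lt p q) := inferInstanceAs (Decidable (NegGold _ _))

theorem lt_iff {p q : ℤ × ℤ} : Lt p q ↔ val p < val q := by
  rw [Lt, negGold_iff, val, val]
  push_cast
  constructor <;> intro h <;> linarith

theorem val_eq_zero_iff {p : ℤ × ℤ} : val p = 0 ↔ p = 0 := by
  refine ⟨fun h => ?_, fun h => by simp [h, val]⟩
  obtain ⟨m, n⟩ := p
  obtain rfl : n = 0 := by
    by_contra hn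
    exact ((Real.goldenRatio_irrational.intCast_mul hn).intCast_add m).ne_zero h
  simpa [val] using h

theorem val_add (p q : ℤ × ℤ) : val (p + q) = val p + val q := by
  simp only [val, Prod.fst_add, Prod.snd_add]; push_cast; ring

theorem conj_add (p q : ℤ × ℤ) : conj (p + q) = conj p + conj q := by
  simp only [conj, Prod.fst_add, Prod.snd_add]; push_cast; ring

/-- Multiplication by `φ³ = 2φ + 1`. -/
def mulGoldCube (p : ℤ × ℤ) : ℤ × ℤ := (p.1 + 2 * p.2, 2 * p.1 + 3 * p.2)

theorem val_mulGoldCube (p : ℤ × ℤ) : val (mulGoldCube p) = gold ^ 3 * val p := by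
  simp only [val, mulGoldCube]; push_cast
  linear_combination (-(p.1 : ℝ) * (gold + 1) - p.2 * (gold ^ 2 + gold + 2)) * gold_sq

theorem conj_mulGoldCube (p : ℤ × ℤ) : conj (mulGoldCube p) = (3 - 2 * gold) * conj p := by
  simp only [conj, mulGoldCube]; push_cast
  linear_combination (-2 * (p.2 : ℝ)) * gold_sq

/-- `Rmap` in coordinates, with branch tests that the kernel can evaluate. -/
def R (p : ℤ × ℤ) : ℤ × ℤ :=
  if Lt p (2, -1) then mulGoldCube p
  else if Lt p (4, -2) then p + (-2, 2)
  else if Lt p (-2, 2) then mulGoldCube p + (0, -2)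
  else if Lt p (0, 1) then p + (2, -2)
  else mulGoldCube p + (0, -4)

def S (p : ℤ × ℤ) : ℤ × ℤ := if p = 0 then 0 else (2 - p.1, -p.2)

theorem R_eq_ite (p : ℤ × ℤ) : R p =
    if val p < 2 - gold then mulGoldCube p
    else if val p < 4 - 2 * gold then p + (-2, 2)
    else if val p < 2 * gold - 2 then mulGoldCube p + (0, -2)
    else if val p < gold then p + (2, -2)
    else mulGoldCube p + (0, -4) := by
  have h₁ : val (2, -1) = 2 - gold := by simp only [val]; push_cast; ring
  have h₂ : val (4, -2) = 4 - 2 * gold := by simp only [val]; push_cast; ring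
  have h₃ : val (-2, 2) = 2 * gold - 2 := by simp only [val]; push_cast; ring
  have h₄ : val (0, 1) = gold := by simp only [val]; push_cast; ring
  simp only [R, lt_iff, h₁, h₂, h₃, h₄]

theorem val_R (p : ℤ × ℤ) : val (R p) = Rmap (val p) := by
  rw [R_eq_ite, Rmap]
  split_ifs <;> simp only [val_add, val_mulGoldCube] <;> simp only [val] <;> push_cast <;> ring

theorem val_S (p : ℤ × ℤ) : val (S p) = Smap (val p) := by
  unfold S Smap
  by_cases hp : p = 0
  · simp [hp, val]
  · rw [if_neg hp, if_neg (mt val_eq_zero_iff.mp hp)]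
    simp only [val]; push_cast; ring

theorem abs_conj_S_le (p : ℤ × ℤ) : |conj (S p)| ≤ |conj p| + 2 := by
  unfold S
  split_ifs
  · simp only [conj, Prod.fst_zero, Prod.snd_zero, Int.cast_zero, zero_mul, add_zero, abs_zero]
    positivity
  · have : conj (2 - p.1, -p.2) = 2 - conj p := by simp only [conj]; push_cast; ring
    rw [this]
    exact (abs_sub _ _).trans (by rw [abs_two]; linarith)

theorem abs_conj_R_le_of_not_mem {p : ℤ × ℤ} (hp : val p ∉ translationSet) :
    |conj (R p)| ≤ |conj p| / 4 + 5 / 2 := by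
  obtain ⟨hg₁, hg₂⟩ := gold_bounds
  have key : ∀ c : ℝ, |c| ≤ 5 / 2 → |(3 - 2 * gold) * conj p + c| ≤ |conj p| / 4 + 5 / 2 := by
    intro c hc
    have hk : |3 - 2 * gold| ≤ 1 / 4 := abs_le.mpr ⟨by linarith, by linarith⟩
    calc |(3 - 2 * gold) * conj p + c| ≤ |3 - 2 * gold| * |conj p| + |c| := by
          rw [← abs_mul]; exact abs_add_le _ _
      _ ≤ |conj p| / 4 + 5 / 2 := by nlinarith [abs_nonneg (conj p)]
  simp only [translationSet, mem_union, mem_Ico, not_or, not_and_or, not_le, not_lt] at hp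
  rw [R_eq_ite]
  split_ifs <;> simp only [conj_add, conj_mulGoldCube]
  · simpa using key 0 (by norm_num)
  · exfalso; rcases hp.1 with h | h <;> linarith
  · refine key _ (abs_le.mpr ⟨?_, ?_⟩) <;> simp only [conj] <;> push_cast <;> linarith
  · exfalso; rcases hp.2 with h | h <;> linarith
  · refine key _ (abs_le.mpr ⟨?_, ?_⟩) <;> simp only [conj] <;> push_cast <;> linarith

theorem abs_conj_R_le (p : ℤ × ℤ) : |conj (R p)| ≤ |conj p| + 13 / 4 := by
  by_cases hp : val p ∈ translationSet
  · obtain ⟨hg₁, hg₂⟩ := gold_bounds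
    have key : ∀ c : ℝ, |c| ≤ 13 / 4 → |conj p + c| ≤ |conj p| + 13 / 4 := fun c hc =>
      (abs_add_le _ _).trans (by linarith)
    simp only [translationSet, mem_union, mem_Ico] at hp
    rw [R_eq_ite]
    split_ifs <;> try simp only [conj_add]
    · rcases hp with h | h <;> linarith
    · refine key _ (abs_le.mpr ⟨?_, ?_⟩) <;> simp only [conj] <;> push_cast <;> linarith
    · rcases hp with h | h <;> linarith
    · refine key _ (abs_le.mpr ⟨?_, ?_⟩) <;> simp only [conj] <;> push_cast <;> linarith
    · rcases hp with h | h <;> linarith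
  · linarith [abs_conj_R_le_of_not_mem hp, abs_nonneg (conj p)]

def terminalPairs : List (ℤ × ℤ) :=
  [(0, 0), (1, 0), (2, -1), (0, 1), (-1, 1), (-3, 3), (3, -1), (5, -3)]

theorem image_val_terminalPairs : val '' {p | p ∈ terminalPairs} = terminalSet := by
  ext x
  simp [terminalPairs, terminalSet, val, eq_comm (a := x), ← sub_eq_add_neg, neg_add_eq_sub]

theorem mapsTo_terminalSet {f : ℤ × ℤ → ℤ × ℤ} {F : ℝ → ℝ} (hF : ∀ p, val (f p) = F (val p))
    (hf : ∀ p ∈ terminalPairs, f p ∈ terminalPairs) : MapsTo F terminalSet terminalSet := by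
  rw [← image_val_terminalPairs]
  rintro _ ⟨p, hp, rfl⟩
  exact ⟨f p, hf p hp, hF p⟩

theorem settles_of_mem_terminalSet {x : ℝ} (hx : x ∈ terminalSet) : Settles x :=
  .of_mem (mapsTo_terminalSet val_R (by decide))
    (mapsTo_terminalSet (f := R ∘ S) (fun p => by simp [val_R, val_S]) (by decide)) hx

theorem settles_of_mem_terminalPairs {p : ℤ × ℤ} (hp : p ∈ terminalPairs) : Settles (val p) :=
  settles_of_mem_terminalSet (image_val_terminalPairs ▸ mem_image_of_mem val hp)

theorem settles_of_settles_R {p : ℤ × ℤ} (h₁ : Settles (val (R p)))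
    (h₂ : Settles (val (R (S p)))) : Settles (val p) :=
  .of_apply (by rwa [← val_R]) (by rwa [Function.comp_apply, ← val_S, ← val_R])

def reachesIn : ℕ → ℤ × ℤ → Bool
  | 0, p => p ∈ terminalPairs
  | k + 1, p => p ∈ terminalPairs || (reachesIn k (R p) && reachesIn k (R (S p)))

theorem settles_of_reachesIn {k : ℕ} {p : ℤ × ℤ} (h : reachesIn k p = true) :
    Settles (val p) := by
  induction k generalizing p with
  | zero => exact settles_of_mem_terminalPairs (by simpa [reachesIn] using h)
  | succ k ih =>
    simp only [reachesIn, Bool.or_eq_true, decide_eq_true_eq, Bool.and_eq_true] at h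
    rcases h with hp | ⟨h₁, h₂⟩
    · exact settles_of_mem_terminalPairs hp
    · exact settles_of_settles_R (ih h₁) (ih h₂)

theorem reachesIn_three_of_mem_Icc :
    ∀ m ∈ Finset.Icc (-12 : ℤ) 12, ∀ n ∈ Finset.Icc (-6 : ℤ) 6,
      ¬ Lt (m, n) 0 → Lt (m, n) (2, 0) → reachesIn 3 (m, n) = true := by
  decide

theorem settles_of_abs_conj_le_thirteen {p : ℤ × ℤ} (hp : val p ∈ Ico 0 2)
    (hz : |conj p| ≤ 13) : Settles (val p) := by
  obtain ⟨hg₁, hg₂⟩ := gold_bounds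
  obtain ⟨h₀, h₂⟩ := hp
  obtain ⟨hz₁, hz₂⟩ := abs_le.mp hz
  obtain ⟨m, n⟩ := p
  simp only [val, conj] at h₀ h₂ hz₁ hz₂
  have hn : n ∈ Finset.Icc (-6 : ℤ) 6 := by
    rw [Finset.mem_Icc]; constructor <;> by_contra! h
    · have : (n : ℝ) ≤ -7 := by exact_mod_cast (by omega : n ≤ -7)
      nlinarith
    · have : (7 : ℝ) ≤ n := by exact_mod_cast (by omega : 7 ≤ n)
      nlinarith
  have hm : m ∈ Finset.Icc (-12 : ℤ) 12 := by
    rw [Finset.mem_Icc] at hn ⊢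
    have : (-6 : ℝ) ≤ n ∧ (n : ℝ) ≤ 6 := ⟨by exact_mod_cast hn.1, by exact_mod_cast hn.2⟩
    constructor <;> by_contra! h
    · have : (m : ℝ) ≤ -13 := by exact_mod_cast (by omega : m ≤ -13)
      nlinarith
    · have : (13 : ℝ) ≤ m := by exact_mod_cast (by omega : 13 ≤ m)
      nlinarith
  refine settles_of_reachesIn (reachesIn_three_of_mem_Icc m hm n hn ?_ ?_) <;>
    rw [lt_iff] <;> simp only [val, Prod.fst_zero, Prod.snd_zero] <;> push_cast <;> linarith

theorem settles_of_forall_R {w : ℤ × ℤ} (hw : val w ∈ Ico 0 2)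
    (h : ∀ u, val u ∈ Ico 0 2 → |conj u| ≤ |conj w| + 2 →
      (val w ∈ outerSet → val w ≠ gold → val u ∈ outerSet) → Settles (val (R u))) :
    Settles (val w) :=
  settles_of_settles_R (h w hw (by linarith) fun hw _ => hw)
    (h (S w) (val_S w ▸ Smap_mem_Ico hw) (abs_conj_S_le w)
      fun hwO hwg => val_S w ▸ Smap_mem_outerSet hwO hwg)

theorem settles_of_forall_abs_conj_le_sub_one {p : ℤ × ℤ} (hp : val p ∈ Ico 0 2)
    (hz : 13 ≤ |conj p|)
    (ih : ∀ q, val q ∈ Ico 0 2 → |conj q| ≤ |conj p| - 1 → Settles (val q)) :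
    Settles (val p) := by
  refine settles_of_forall_R hp fun u hu huz _ => ?_
  have hw : val (R u) ∈ Ico 0 2 := val_R u ▸ Rmap_mem_Ico hu
  by_cases ht : val u ∈ translationSet
  · have hwO : val (R u) ∈ outerSet := val_R u ▸ Rmap_mapsTo_translationSet ht
    have hwz := abs_conj_R_le u
    by_cases hwg : val (R u) = gold
    · exact hwg ▸ settles_of_mem_terminalSet (by simp [terminalSet])
    refine settles_of_forall_R hw fun v hv hvz hvO => ih _ (val_R v ▸ Rmap_mem_Ico hv) ?_
    have := abs_conj_R_le_of_not_mem (not_mem_translationSet_of_mem_outerSet (hvO hwO hwg))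
    linarith
  · have hwz := abs_conj_R_le_of_not_mem ht
    refine settles_of_forall_R hw fun v hv hvz _ => ih _ (val_R v ▸ Rmap_mem_Ico hv) ?_
    have := abs_conj_R_le v
    linarith

theorem settles_of_abs_conj_le_thirteen_add (K : ℕ) :
    ∀ p, val p ∈ Ico 0 2 → |conj p| ≤ 13 + K → Settles (val p) := by
  induction K with
  | zero => exact fun p hp hz => settles_of_abs_conj_le_thirteen hp (by simpa using hz)
  | succ K ih =>
    intro p hp hz
    push_cast at hz
    by_cases hK : |conj p| ≤ 13 + K
    · exact ih p hp hK
    · exact settles_of_forall_abs_conj_le_sub_one hp (by linarith [K.cast_nonneg (α := ℝ)])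
        fun q hq hqz => ih q hq (by linarith)

end GoldPair

/-- Any sufficiently long composition of the maps `R` and `R ∘ S` sends a point of
`ℤ[φ] ∩ [0,2)` into the eight-element set of Descent Lemma I. -/
theorem descent_lemma_with_involution (y : ℝ) (hy : y ∈ Set.Ico (0 : ℝ) 2)
    (hZ : y ∈ Zgold) :
    ∃ N₀ : ℕ, ∀ N ≥ N₀, ∀ g : ℕ → ℝ → ℝ,
      (∀ k < N, g k = Rmap ∨ g k = Rmap ∘ Smap) →
      chain g y N ∈ ({0, 1, 2 - gold, gold, gold - 1, 3 * gold - 3, 3 - gold, 5 - 3 * gold} : Set ℝ) := by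
  obtain ⟨m, n, rfl⟩ := hZ
  exact GoldPair.settles_of_abs_conj_le_thirteen_add ⌈|GoldPair.conj (m, n)|⌉₊ (m, n) hy
    (by linarith [Nat.le_ceil |GoldPair.conj (m, n)|])
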